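/- Let n ≥ 4. Let W_B be the Coxeter group on generators s′₁, …, s′_n of the string Coxeter diagram with consecutive edge labels 4, 3, …, 3, and let W_C be the Coxeter group on generators s″₁, …, s″_n of the string diagram with consecutive edge labels 3, …, 3, 4 (in each, m(i,j) = 2 for |i−j| ≥ 2). Set σ′_i = s′_i s′_{i+1}, σ″_i = s″_i s″_{i+1}, and β_i = (σ′_i, σ″_i) ∈ W_B × W_C for i = 1, …, n−1. Then ⟨β₁, …, β_{n−2}⟩ ⊓ ⟨β₂, …, β_{n−1}⟩ ≠ ⟨β₂, …, β_{n−2}⟩ as subgroups of W_B × W_C. -/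

import Mathlib

/-!
Write `σ'_k`, `σ''_k` for the rotations and `β_k = (σ'_k, σ''_k)`. If `(z, 1)` and `(y, w)`
lie in a subgroup and `y ^ 2 = z y z`, then so does `(y, 1) = (y, w)⁻¹ (z, 1) (y, w) (z, 1)`.
Since `σ'_1` has order 4 in `W_B` while `σ''_1` has order 3 in `W_C`, `β_1 ^ 9 = (σ'_1, 1)`,
and `σ'_2 ^ 2 = σ'_1 σ'_2 σ'_1` gives `(σ'_2, 1) ∈ ⟨β_1, …, β_{n-2}⟩`. Dually
`β_{n-1} ^ 4 = (σ'_{n-1}, 1)`, and `σ'_k ^ 2 = σ'_{k+1} σ'_k σ'_{k+1}` walks down the string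
to `(σ'_2, 1) ∈ ⟨β_2, …, β_{n-1}⟩`. Finally `W_B` and `W_C` map to permutations of `ℕ`
so that the generators `s_2, …, s_{n-1}` have the same images in both; the two maps then
agree on `⟨β_2, …, β_{n-2}⟩`, but send `σ'_2` to a 3-cycle and `1` to `1`.
-/

open Equiv

section Involutions

variable {G : Type*} [Group G] {a b : G}

theorem commute_of_mul_pow_two_eq_one (ha : a * a = 1) (hb : b * b = 1)
    (h : (a * b) ^ 2 = 1) : Commute a b := by
  have := eq_inv_of_mul_eq_one_left (pow_two (a * b) ▸ h)
  rwa [mul_inv_rev, inv_eq_of_mul_eq_one_right ha, inv_eq_of_mul_eq_one_right hb] at this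

theorem Commute.mul_pow_two_eq_one (ha : a * a = 1) (hb : b * b = 1) (h : Commute a b) :
    (a * b) ^ 2 = 1 := by
  rw [h.mul_pow, pow_two, pow_two, ha, hb, one_mul]

theorem mul_pow_three_eq_one_of_braid (ha : a * a = 1) (hb : b * b = 1)
    (h : a * b * a = b * a * b) : (a * b) ^ 3 = 1 :=
  calc (a * b) ^ 3 = a * b * a * (b * a * b) := by
        simp only [pow_succ, pow_zero, one_mul, mul_assoc]
    _ = b * a * (b * b) * a * b := by rw [h]; group
    _ = 1 := by rw [hb, mul_one, mul_assoc b, ha, mul_one, hb]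

theorem mul_pow_two_eq_mul_rev_of_pow_three (ha : a * a = 1) (hb : b * b = 1)
    (h : (a * b) ^ 3 = 1) : (a * b) ^ 2 = b * a := by
  have : (a * b) ^ 2 * (a * b) = 1 := by rwa [← pow_succ]
  rw [eq_inv_of_mul_eq_one_left this, mul_inv_rev, inv_eq_of_mul_eq_one_right ha,
    inv_eq_of_mul_eq_one_right hb]

end Involutions

namespace Equiv

variable {α : Type*} [DecidableEq α]

theorem swap_mul_swap_pow_three {a b c : α} (hab : a ≠ b) (hac : a ≠ c) (hbc : b ≠ c) :
    (swap a b * swap b c) ^ 3 = 1 := by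
  refine mul_pow_three_eq_one_of_braid (swap_mul_self a b) (swap_mul_self b c) ?_
  have h := swap_mul_swap_mul_swap (x := c) (y := b) (z := a) hbc.symm hac.symm
  rw [swap_comm b a, swap_comm c b] at h
  rw [h, swap_mul_swap_mul_swap hab hac, swap_comm]

theorem swap_mul_swap_pow_two {a b c d : α} (hab : a ≠ b) (hac : a ≠ c) (had : a ≠ d)
    (hbc : b ≠ c) (hbd : b ≠ d) (hcd : c ≠ d) : (swap a b * swap c d) ^ 2 = 1 :=
  (Perm.disjoint_swap_swap (by simp [*])).commute.mul_pow_two_eq_one (swap_mul_self a b)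
    (swap_mul_self c d)

end Equiv

namespace Subgroup

variable {G K : Type*} [Group G] [Group K] {H : Subgroup (G × K)}

theorem mk_one_mem_of_pow_eq {x : G} {u : K} (h : (x, u) ∈ H) {e : ℕ} (hx : x ^ e = x)
    (hu : u ^ e = 1) : (x, 1) ∈ H := by
  simpa [hx, hu] using H.pow_mem h e

theorem mk_one_mem_of_sq_eq {y z : G} {w : K} (hz : (z, 1) ∈ H) (hy : (y, w) ∈ H)
    (h : y ^ 2 = z * y * z) : (y, 1) ∈ H := by
  have key : y⁻¹ * (z * y * z) = y := by rw [← h, pow_two, inv_mul_cancel_left]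
  have := H.mul_mem (H.inv_mem hy) (H.mul_mem (H.mul_mem hz hy) hz)
  convert this using 1
  ext <;> simp [key]

variable {a b c : G} {w : K}

theorem mk_mul_one_mem_of_left (ha : a * a = 1) (hb : b * b = 1) (hc : c * c = 1)
    (hbc : (b * c) ^ 3 = 1) (hac : Commute a c) (h₁ : (a * b, 1) ∈ H)
    (h₂ : (b * c, w) ∈ H) :
    (b * c, 1) ∈ H := by
  refine mk_one_mem_of_sq_eq h₁ h₂ ?_
  calc (b * c) ^ 2 = c * (a * a) * b := by
        rw [mul_pow_two_eq_mul_rev_of_pow_three hb hc hbc, ha, mul_one]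
    _ = a * (b * b) * c * a * b := by rw [hb, mul_one, hac.eq]; group
    _ = a * b * (b * c) * (a * b) := by group

theorem mk_mul_one_mem_of_right (ha : a * a = 1) (hb : b * b = 1) (hc : c * c = 1)
    (hab : (a * b) ^ 3 = 1) (hac : Commute a c) (h₁ : (b * c, 1) ∈ H)
    (h₂ : (a * b, w) ∈ H) :
    (a * b, 1) ∈ H := by
  refine mk_one_mem_of_sq_eq h₁ h₂ ?_
  calc (a * b) ^ 2 = b * a * (c * c) := by
        rw [mul_pow_two_eq_mul_rev_of_pow_three ha hb hab, hc, mul_one]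
    _ = b * c * a * (b * b) * c := by
        rw [hb, mul_one, mul_assoc b, ← mul_assoc a, hac.eq]; group
    _ = b * c * (a * b) * (b * c) := by group

end Subgroup

def cubePerm (n : ℕ) (i : Fin n) : Perm ℕ :=
  if (i : ℕ) = 0 then 1 else swap (i - 1) i

def crossPerm (n : ℕ) (i : Fin n) : Perm ℕ :=
  if (i : ℕ) = 0 then swap 0 (n - 1) else if (i : ℕ) = n - 1 then 1 else swap (i - 1) i

theorem cubePerm_eq_crossPerm {n : ℕ} {i : Fin n} (h₁ : 1 ≤ (i : ℕ))
    (h₂ : (i : ℕ) ≤ n - 2) :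
    cubePerm n i = crossPerm n i := by
  rw [cubePerm, crossPerm, if_neg (by omega), if_neg (by omega), if_neg (by omega)]

theorem cubePerm_one_mul_cubePerm_two_ne_one {n : ℕ} (hn : 3 ≤ n) :
    cubePerm n ⟨1, by omega⟩ * cubePerm n ⟨2, by omega⟩ ≠ 1 := by
  intro h
  simpa [cubePerm, swap_apply_of_ne_of_ne] using DFunLike.congr_fun h 0

namespace CoxeterMatrix

theorem isLiftable_of_lt {B : Type*} [LinearOrder B] {M : CoxeterMatrix B}
    {G : Type*} [Group G] {f : B → G} (hf : ∀ i, f i * f i = 1)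
    (h : ∀ i j, i < j → (f i * f j) ^ M i j = 1) : M.IsLiftable f := by
  intro i j
  rcases lt_trichotomy i j with hij | rfl | hij
  · exact h i j hij
  · rw [M.diagonal, pow_one, hf]
  · rw [M.symmetric, ← inv_inj, ← inv_pow, mul_inv_rev, inv_eq_of_mul_eq_one_right (hf i),
      inv_eq_of_mul_eq_one_right (hf j), h j i hij, inv_one]

section

variable {B : Type*} {M : CoxeterMatrix B} {i j : B}

theorem simple_mul_simple_pow_of_eq {m : ℕ} (h : M i j = m) :
    (M.simple i * M.simple j) ^ m = 1 :=
  h ▸ M.toCoxeterSystem.simple_mul_simple_pow i j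

theorem commute_simple_of_eq_two (h : M i j = 2) : Commute (M.simple i) (M.simple j) :=
  commute_of_mul_pow_two_eq_one (M.toCoxeterSystem.simple_mul_simple_self i)
    (M.toCoxeterSystem.simple_mul_simple_self j) (simple_mul_simple_pow_of_eq h)

end

section

variable {n : ℕ} {M : CoxeterMatrix (Fin n)} {i j : Fin n}

def IsCubeDiagram (M : CoxeterMatrix (Fin n)) : Prop :=
  ∀ i j : Fin n, M.M i j =
    if i = j then 1
    else if (i : ℕ) + 1 = (j : ℕ) ∨ (j : ℕ) + 1 = (i : ℕ) then
      (if (i : ℕ) = 0 ∨ (j : ℕ) = 0 then 4 else 3)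
    else 2

def IsCrossDiagram (M : CoxeterMatrix (Fin n)) : Prop :=
  ∀ i j : Fin n, M.M i j =
    if i = j then 1
    else if (i : ℕ) + 1 = (j : ℕ) ∨ (j : ℕ) + 1 = (i : ℕ) then
      (if (i : ℕ) = n - 1 ∨ (j : ℕ) = n - 1 then 4 else 3)
    else 2

theorem IsCubeDiagram.apply_of_succ (hM : M.IsCubeDiagram) (hij : (j : ℕ) = i + 1) :
    M i j = if (i : ℕ) = 0 then 4 else 3 := by
  rw [hM]
  simp [Fin.ext_iff, hij]

theorem IsCubeDiagram.apply_of_add_two_le (hM : M.IsCubeDiagram) (hij : (i : ℕ) + 2 ≤ j) :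
    M i j = 2 := by
  rw [hM, if_neg (by omega), if_neg (by omega)]

theorem IsCrossDiagram.apply_of_succ (hM : M.IsCrossDiagram) (hij : (j : ℕ) = i + 1) :
    M i j = if (j : ℕ) = n - 1 then 4 else 3 := by
  have := j.isLt
  rw [hM]
  simp [Fin.ext_iff, hij, show (i : ℕ) ≠ n - 1 by omega]

theorem IsCrossDiagram.apply_of_add_two_le (hM : M.IsCrossDiagram) (hij : (i : ℕ) + 2 ≤ j) :
    M i j = 2 := by
  rw [hM, if_neg (by omega), if_neg (by omega)]

theorem IsCubeDiagram.isLiftable_cubePerm (hM : M.IsCubeDiagram) :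
    M.IsLiftable (cubePerm n) := by
  refine isLiftable_of_lt (fun i => ?_) (fun i j hij => ?_)
  · unfold cubePerm; split_ifs <;> simp
  have hij : (i : ℕ) < j := hij
  unfold cubePerm
  rcases (show (j : ℕ) = i + 1 ∨ (i : ℕ) + 2 ≤ j by omega) with hj | hj
  · rw [hM.apply_of_succ hj, if_neg (show (j : ℕ) ≠ 0 by omega), hj, Nat.add_sub_cancel]
    split_ifs with hi
    · simp [hi, pow_succ]
    · exact swap_mul_swap_pow_three (by omega) (by omega) (by omega)
  · rw [hM.apply_of_add_two_le hj, if_neg (show (j : ℕ) ≠ 0 by omega)]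
    split_ifs
    · simp [pow_succ]
    · exact swap_mul_swap_pow_two (by omega) (by omega) (by omega) (by omega) (by omega) (by omega)

theorem IsCrossDiagram.isLiftable_crossPerm (hM : M.IsCrossDiagram) :
    M.IsLiftable (crossPerm n) := by
  refine isLiftable_of_lt (fun i => ?_) (fun i j hij => ?_)
  · unfold crossPerm; split_ifs <;> simp
  have hij : (i : ℕ) < j := hij
  have hjn := j.isLt
  unfold crossPerm
  rw [if_neg (show (j : ℕ) ≠ 0 by omega), if_neg (show (i : ℕ) ≠ n - 1 by omega)]
  rcases (show (j : ℕ) = i + 1 ∨ (i : ℕ) + 2 ≤ j by omega) with hj | hj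
  · rw [hM.apply_of_succ hj]
    split_ifs with hi
    · simp [pow_succ]
    · rw [swap_comm, hj, hi]
      exact swap_mul_swap_pow_three (by omega) (by omega) (by omega)
    · simp [pow_succ]
    · rw [hj, Nat.add_sub_cancel]
      exact swap_mul_swap_pow_three (by omega) (by omega) (by omega)
  · rw [hM.apply_of_add_two_le hj]
    split_ifs
    · simp [pow_succ]
    · exact swap_mul_swap_pow_two (by omega) (by omega) (by omega) (by omega) (by omega) (by omega)
    · simp [pow_succ]
    · exact swap_mul_swap_pow_two (by omega) (by omega) (by omega) (by omega) (by omega) (by omega)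

def IsCubeDiagram.toPerm (hM : M.IsCubeDiagram) : M.Group →* Perm ℕ :=
  M.toCoxeterSystem.lift ⟨cubePerm n, hM.isLiftable_cubePerm⟩

def IsCrossDiagram.toPerm (hM : M.IsCrossDiagram) : M.Group →* Perm ℕ :=
  M.toCoxeterSystem.lift ⟨crossPerm n, hM.isLiftable_crossPerm⟩

theorem IsCubeDiagram.toPerm_simple (hM : M.IsCubeDiagram) (i : Fin n) :
    hM.toPerm (M.simple i) = cubePerm n i :=
  M.toCoxeterSystem.lift_apply_simple _ i

theorem IsCrossDiagram.toPerm_simple (hM : M.IsCrossDiagram) (i : Fin n) :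
    hM.toPerm (M.simple i) = crossPerm n i :=
  M.toCoxeterSystem.lift_apply_simple _ i

variable {MB MC : CoxeterMatrix (Fin n)} {H : Subgroup (MB.Group × MC.Group)}

theorem mk_simple_mul_simple_one_mem_of_facet (hB : MB.IsCubeDiagram) (hC : MC.IsCrossDiagram)
    (hH : ∀ i j : Fin n, (j : ℕ) = i + 1 → (j : ℕ) ≤ n - 2 →
      (MB.simple i * MB.simple j, MC.simple i * MC.simple j) ∈ H)
    {i j k : Fin n} (hi : (i : ℕ) = 0) (hij : (j : ℕ) = i + 1) (hjk : (k : ℕ) = j + 1)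
    (hk : (k : ℕ) ≤ n - 2) :
    (MB.simple j * MB.simple k, 1) ∈ H := by
  have sq := MB.toCoxeterSystem.simple_mul_simple_self
  have hij' : (MB.simple i * MB.simple j, 1) ∈ H := by
    refine Subgroup.mk_one_mem_of_pow_eq (hH i j hij (by omega)) (e := 9) ?_ ?_
    · rw [show 9 = 4 * 2 + 1 from rfl, pow_succ, pow_mul, simple_mul_simple_pow_of_eq
        ((hB.apply_of_succ hij).trans (if_pos hi)), one_pow, one_mul]
    · rw [show 9 = 3 * 3 from rfl, pow_mul, simple_mul_simple_pow_of_eq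
        ((hC.apply_of_succ hij).trans (if_neg (by omega))), one_pow]
  exact Subgroup.mk_mul_one_mem_of_left (sq i) (sq j) (sq k)
    (simple_mul_simple_pow_of_eq ((hB.apply_of_succ hjk).trans (if_neg (by omega))))
    (commute_simple_of_eq_two (hB.apply_of_add_two_le (by omega))) hij'
    (hH j k hjk hk)

theorem mk_simple_mul_simple_one_mem_of_vertexFigure (hB : MB.IsCubeDiagram)
    (hC : MC.IsCrossDiagram)
    (hH : ∀ i j : Fin n, (j : ℕ) = i + 1 → 1 ≤ (i : ℕ) →
      (MB.simple i * MB.simple j, MC.simple i * MC.simple j) ∈ H)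
    {i j : Fin n} (hij : (j : ℕ) = i + 1) (hi : 1 ≤ (i : ℕ)) :
    (MB.simple i * MB.simple j, 1) ∈ H := by
  have sq := MB.toCoxeterSystem.simple_mul_simple_self
  obtain ⟨d, hd⟩ : ∃ d, (j : ℕ) + d = n - 1 := ⟨n - 1 - j, by omega⟩
  induction d generalizing i j with
  | zero =>
    refine Subgroup.mk_one_mem_of_pow_eq (hH i j hij hi) (e := 4) ?_ ?_
    · rw [pow_succ, simple_mul_simple_pow_of_eq
        ((hB.apply_of_succ hij).trans (if_neg (by omega))), one_mul]
    · exact simple_mul_simple_pow_of_eq ((hC.apply_of_succ hij).trans (if_pos (by omega)))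
  | succ d ih =>
    have hk : (j : ℕ) + 1 < n := by omega
    exact Subgroup.mk_mul_one_mem_of_right (sq _) (sq _) (sq (⟨j + 1, hk⟩ : Fin n))
      (simple_mul_simple_pow_of_eq ((hB.apply_of_succ hij).trans (if_neg (by omega))))
      (commute_simple_of_eq_two (hB.apply_of_add_two_le (by dsimp only; omega)))
      (ih rfl (by omega) (by dsimp only; omega)) (hH i j hij hi)

end

end CoxeterMatrix

open CoxeterMatrix in
/-- For `n ≥ 4`, in `W_B × W_C` (cube and cross-polytope Coxeter groups) with
`β_k = (σ'_k, σ''_k)` the pairs of abstract rotations (`σ_k = s_{k-1} s_k` in 0-indexed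
generators, so `β_k` corresponds to the consecutive pair `(i, j) = (k-1, k)`), we have
`⟨β₁, …, β_{n-2}⟩ ⊓ ⟨β₂, …, β_{n-1}⟩ ≠ ⟨β₂, …, β_{n-2}⟩`. -/
theorem stmt_16 (n : ℕ) (hn : 4 ≤ n)
    (MB MC : CoxeterMatrix (Fin n))
    (hMB : ∀ i j : Fin n, MB.M i j =
      if i = j then 1
      else if (i : ℕ) + 1 = (j : ℕ) ∨ (j : ℕ) + 1 = (i : ℕ) then
        (if (i : ℕ) = 0 ∨ (j : ℕ) = 0 then 4 else 3)
      else 2)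
    (hMC : ∀ i j : Fin n, MC.M i j =
      if i = j then 1
      else if (i : ℕ) + 1 = (j : ℕ) ∨ (j : ℕ) + 1 = (i : ℕ) then
        (if (i : ℕ) = n - 1 ∨ (j : ℕ) = n - 1 then 4 else 3)
      else 2) :
    Subgroup.closure
        {p : MB.Group × MC.Group |
          ∃ i j : Fin n, (j : ℕ) = (i : ℕ) + 1 ∧ (j : ℕ) ≤ n - 2 ∧
            p = (MB.simple i * MB.simple j, MC.simple i * MC.simple j)} ⊓
      Subgroup.closure
        {p : MB.Group × MC.Group |
          ∃ i j : Fin n, (j : ℕ) = (i : ℕ) + 1 ∧ 1 ≤ (i : ℕ) ∧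
            p = (MB.simple i * MB.simple j, MC.simple i * MC.simple j)} ≠
      Subgroup.closure
        {p : MB.Group × MC.Group |
          ∃ i j : Fin n, (j : ℕ) = (i : ℕ) + 1 ∧ 1 ≤ (i : ℕ) ∧ (j : ℕ) ≤ n - 2 ∧
            p = (MB.simple i * MB.simple j, MC.simple i * MC.simple j)} := by
  have hB : MB.IsCubeDiagram := hMB
  have hC : MC.IsCrossDiagram := hMC
  rw [Ne, SetLike.ext_iff, not_forall]
  refine ⟨(MB.simple ⟨1, by omega⟩ * MB.simple ⟨2, by omega⟩, 1), fun h => ?_⟩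
  have hD := h.1 <| Subgroup.mem_inf.2
    ⟨mk_simple_mul_simple_one_mem_of_facet hB hC
      (fun i j hij hj => by exact Subgroup.subset_closure ⟨i, j, hij, hj, rfl⟩)
      (i := ⟨0, by omega⟩) rfl rfl rfl (by dsimp only; omega),
    mk_simple_mul_simple_one_mem_of_vertexFigure hB hC
      (fun i j hij hi => by exact Subgroup.subset_closure ⟨i, j, hij, hi, rfl⟩)
      (i := ⟨1, by omega⟩) rfl le_rfl⟩
  have hφψ := MonoidHom.eqOn_closure (f := hB.toPerm.comp (MonoidHom.fst _ _))
    (g := hC.toPerm.comp (MonoidHom.snd _ _)) (by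
      rintro _ ⟨i, j, hij, hi, hj, rfl⟩
      simp [hB.toPerm_simple, hC.toPerm_simple,
        cubePerm_eq_crossPerm hi (by omega : (i : ℕ) ≤ n - 2),
        cubePerm_eq_crossPerm (by omega : 1 ≤ (j : ℕ)) hj]) hD
  exact cubePerm_one_mul_cubePerm_two_ne_one (n := n) (by omega)
    (by simpa [hB.toPerm_simple, hC.toPerm_simple] using hφψ)
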